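/- arXiv:2509.00991 — 2 statements merged into one kernel-verified Lean document; each statement's English description precedes it below -/
import Mathlib

section
/- Let S be a compact topological semigroup that is generated (topologically) by a regular J-class J having only finitely many H-classes. Then J is a clopen subset of S. -/
/-- Green's quasi-order ≤_R : s ≤_R t iff sS¹ ⊆ tS¹, i.e. s ∈ tS¹. -/
def leR {S : Type*} [Semigroup S] (s t : S) : Prop := s = t ∨ ∃ x, s = t * x

/-- Green's quasi-order ≤_L : s ≤_L t iff S¹s ⊆ S¹t, i.e. s ∈ S¹t. -/
def leL {S : Type*} [Semigroup S] (s t : S) : Prop := s = t ∨ ∃ x, s = x * t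

/-- Green's quasi-order ≤_J : s ≤_J t iff S¹sS¹ ⊆ S¹tS¹, i.e. s ∈ S¹tS¹. -/
def leJ {S : Type*} [Semigroup S] (s t : S) : Prop :=
  s = t ∨ (∃ x, s = x * t) ∨ (∃ y, s = t * y) ∨ ∃ x y, s = x * t * y

/-- Green's equivalence R. -/
def eqR {S : Type*} [Semigroup S] (s t : S) : Prop := leR s t ∧ leR t s

/-- Green's equivalence L. -/
def eqL {S : Type*} [Semigroup S] (s t : S) : Prop := leL s t ∧ leL t s

/-- Green's equivalence J. -/
def eqJ {S : Type*} [Semigroup S] (s t : S) : Prop := leJ s t ∧ leJ t s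

/-!
A compact semigroup is stable: `a = x * a * c` forces `a ≤_R a * c` and `a ≤_L x * a`, because an
idempotent `(e, f)` of the compact subsemigroup of `S × Sᵐᵒᵖ` cut out by `e * a * f = a` and these
two (closed) conditions satisfies `e * a = a = a * f`. Stability makes membership of `s * u` in `J`
(for `s, u ∈ J`) depend only on the H-classes of `s` and `u`, so `J` and the set `P` of pairs of
`J` whose product leaves `J` are finite unions of closed sets. The ideal `W` generated by the
compact set of products of `P` is closed and disjoint from `J`, while `J ∪ W` is a closed
subsemigroup containing `J`, hence all of `S`; so `J` is the complement of `W`.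
-/

open Set Pointwise

section Green

variable {S : Type*} [Semigroup S] {a b c : S}

theorem leR_refl (a : S) : leR a a := Or.inl rfl

theorem leL_refl (a : S) : leL a a := Or.inl rfl

theorem leJ_refl (a : S) : leJ a a := Or.inl rfl

theorem leR_mul_right (a b : S) : leR (a * b) a := Or.inr ⟨b, rfl⟩

theorem leL_mul_left (a b : S) : leL (a * b) b := Or.inr ⟨a, rfl⟩

theorem leJ_mul_right (a b : S) : leJ (a * b) a := Or.inr (Or.inr (Or.inl ⟨b, rfl⟩))

theorem leJ_mul_left (a b : S) : leJ (a * b) b := Or.inr (Or.inl ⟨a, rfl⟩)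

theorem leR.trans (hab : leR a b) (hbc : leR b c) : leR a c := by
  rcases hab with rfl | ⟨x, rfl⟩
  · exact hbc
  rcases hbc with rfl | ⟨y, rfl⟩
  · exact leR_mul_right _ _
  · exact Or.inr ⟨y * x, mul_assoc _ _ _⟩

theorem leL.trans (hab : leL a b) (hbc : leL b c) : leL a c := by
  rcases hab with rfl | ⟨x, rfl⟩
  · exact hbc
  rcases hbc with rfl | ⟨y, rfl⟩
  · exact leL_mul_left _ _
  · exact Or.inr ⟨x * y, (mul_assoc _ _ _).symm⟩

theorem leR.mul_left (h : leR a b) (c : S) : leR (c * a) (c * b) := by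
  rcases h with rfl | ⟨x, rfl⟩
  · exact leR_refl _
  · exact Or.inr ⟨x, (mul_assoc _ _ _).symm⟩

theorem leL.mul_right (h : leL a b) (c : S) : leL (a * c) (b * c) := by
  rcases h with rfl | ⟨x, rfl⟩
  · exact leL_refl _
  · exact Or.inr ⟨x, mul_assoc _ _ _⟩

theorem leJ_iff_exists_withOne : leJ a b ↔ ∃ x y : WithOne S, (a : WithOne S) = x * b * y := by
  simp only [leJ, WithOne.exists, one_mul, mul_one, ← WithOne.coe_mul, WithOne.coe_inj, exists_or]
  tauto

theorem leJ.trans (hab : leJ a b) (hbc : leJ b c) : leJ a c := by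
  obtain ⟨x, y, ha⟩ := leJ_iff_exists_withOne.1 hab
  obtain ⟨u, v, hb⟩ := leJ_iff_exists_withOne.1 hbc
  exact leJ_iff_exists_withOne.2 ⟨x * u, v * y, by rw [ha, hb]; simp only [mul_assoc]⟩

theorem leR.leJ (h : leR a b) : leJ a b := h.imp_right fun ⟨x, hx⟩ => Or.inr (Or.inl ⟨x, hx⟩)

theorem leL.leJ (h : leL a b) : leJ a b := h.imp_right fun ⟨x, hx⟩ => Or.inl ⟨x, hx⟩

theorem eqJ.symm (h : eqJ a b) : eqJ b a := ⟨h.2, h.1⟩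

theorem eqJ.trans (hab : eqJ a b) (hbc : eqJ b c) : eqJ a c :=
  ⟨hab.1.trans hbc.1, hbc.2.trans hab.2⟩

def hClass (s : S) : Set S := {x | eqR x s ∧ eqL x s}

def jClass (t : S) : Set S := {x | eqJ x t}

def exitPairs (t : S) : Set (S × S) :=
  {p | p.1 ∈ jClass t ∧ p.2 ∈ jClass t ∧ p.1 * p.2 ∉ jClass t}

theorem mem_hClass_self (s : S) : s ∈ hClass s :=
  ⟨⟨leR_refl s, leR_refl s⟩, leL_refl s, leL_refl s⟩

theorem mem_hClass_comm {s s' : S} : s' ∈ hClass s ↔ s ∈ hClass s' :=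
  ⟨fun ⟨⟨h₁, h₂⟩, h₃, h₄⟩ => ⟨⟨h₂, h₁⟩, h₄, h₃⟩, fun ⟨⟨h₁, h₂⟩, h₃, h₄⟩ => ⟨⟨h₂, h₁⟩, h₄, h₃⟩⟩

theorem hClass_subset_jClass {s t : S} (hs : s ∈ jClass t) : hClass s ⊆ jClass t :=
  fun _ hx => eqJ.trans ⟨hx.1.1.leJ, hx.1.2.leJ⟩ hs

end Green

theorem isClosed_of_saturated {X : Type*} [TopologicalSpace X] {F : Set (Set X)}
    (hF : F.Finite) (hcl : ∀ H ∈ F, IsClosed H) {P : Set X}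
    (hP : ∀ x ∈ P, ∃ H ∈ F, x ∈ H ∧ H ⊆ P) : IsClosed P := by
  have : P = ⋃ H ∈ {H ∈ F | H ⊆ P}, H :=
    Subset.antisymm (fun x hx => let ⟨H, hH, hxH, hHP⟩ := hP x hx; mem_biUnion ⟨hH, hHP⟩ hxH)
      (iUnion₂_subset fun _ hH => hH.2)
  rw [this]
  exact (hF.subset (sep_subset _ _)).isClosed_biUnion fun H hH => hcl H hH.1

section Compact

variable {S : Type*} [Semigroup S] [TopologicalSpace S] [CompactSpace S] [T2Space S]
  [ContinuousMul S]

theorem isClosed_setOf_leR (b : S) : IsClosed {a | leR a b} := by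
  have : {a | leR a b} = insert b (range (b * ·)) := by
    ext a; simp [leR, eq_comm]
  rw [this]
  exact ((isCompact_range (continuous_const_mul b)).insert b).isClosed

theorem isClosed_setOf_leL (b : S) : IsClosed {a | leL a b} := by
  have : {a | leL a b} = insert b (range (· * b)) := by
    ext a; simp [leL, eq_comm]
  rw [this]
  exact ((isCompact_range (continuous_mul_const b)).insert b).isClosed

theorem isClosed_setOf_leR_swap (b : S) : IsClosed {a | leR b a} := by
  have : {a | leR b a} = insert b (Prod.fst '' ((fun p : S × S => p.1 * p.2) ⁻¹' {b})) := by
    ext a; simp [leR, eq_comm]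
  rw [this]
  exact (((isClosed_singleton.preimage continuous_mul).isCompact.image continuous_fst).insert
    b).isClosed

theorem isClosed_setOf_leL_swap (b : S) : IsClosed {a | leL b a} := by
  have : {a | leL b a} = insert b (Prod.snd '' ((fun p : S × S => p.1 * p.2) ⁻¹' {b})) := by
    ext a; simp [leL, eq_comm]
  rw [this]
  exact (((isClosed_singleton.preimage continuous_mul).isCompact.image continuous_snd).insert
    b).isClosed

theorem isClosed_setOf_exists_leJ {B : Set S} (hB : IsCompact B) :
    IsClosed {a | ∃ b ∈ B, leJ a b} := by
  have : {a | ∃ b ∈ B, leJ a b} = B ∪ univ * B ∪ B * univ ∪ univ * B * univ := by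
    ext a
    constructor
    · rintro ⟨b, hb, rfl | ⟨x, rfl⟩ | ⟨y, rfl⟩ | ⟨x, y, rfl⟩⟩
      exacts [.inl (.inl (.inl hb)), .inl (.inl (.inr (mul_mem_mul (mem_univ x) hb))),
        .inl (.inr (mul_mem_mul hb (mem_univ y))),
        .inr (mul_mem_mul (mul_mem_mul (mem_univ x) hb) (mem_univ y))]
    · rintro (((hb | ⟨x, -, b, hb, rfl⟩) | ⟨b, hb, y, -, rfl⟩) |
        ⟨_, ⟨x, -, b, hb, rfl⟩, y, -, rfl⟩)
      exacts [⟨a, hb, leJ_refl a⟩, ⟨b, hb, leJ_mul_left x b⟩, ⟨b, hb, leJ_mul_right b y⟩,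
        ⟨b, hb, (leJ_mul_right _ y).trans (leJ_mul_left x b)⟩]
  rw [this]
  exact (((hB.union (isCompact_univ.mul hB)).union (hB.mul isCompact_univ)).union
    ((isCompact_univ.mul hB).mul isCompact_univ)).isClosed

theorem leR_and_leL_of_eq_mul_mul {a x c : S} (h : a = x * a * c) :
    leR a (a * c) ∧ leL a (x * a) := by
  let Z : Set (S × Sᵐᵒᵖ) := {p | p.1 * a * p.2.unop = a ∧
    leR (a * p.2.unop) (a * c) ∧ leL (p.1 * a) (x * a)}
  have hZ_closed : IsClosed Z :=
    (isClosed_eq (by fun_prop) continuous_const).inter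
      (((isClosed_setOf_leR _).preimage (by fun_prop)).inter
        ((isClosed_setOf_leL _).preimage (by fun_prop)))
  have hZ_mul : ∀ p ∈ Z, ∀ q ∈ Z, p * q ∈ Z := by
    rintro ⟨y, z⟩ ⟨hyz, -, -⟩ ⟨y', z'⟩ ⟨hyz', hzR', hyL'⟩
    refine ⟨?_, ?_, ?_⟩
    · change y * y' * a * (z'.unop * z.unop) = a
      calc y * y' * a * (z'.unop * z.unop) = y * (y' * a * z'.unop) * z.unop := by
            simp only [mul_assoc]
        _ = a := by rw [hyz', hyz]
    · change leR (a * (z'.unop * z.unop)) (a * c)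
      rw [← mul_assoc]
      exact (leR_mul_right _ _).trans hzR'
    · change leL (y * y' * a) (x * a)
      rw [mul_assoc]
      exact (leL_mul_left _ _).trans hyL'
  obtain ⟨⟨e, f⟩, ⟨hefa, hfR, heL⟩, hidem⟩ := exists_idempotent_in_compact_subsemigroup
    continuous_mul_const Z ⟨(x, .op c), h.symm, leR_refl _, leL_refl _⟩
    hZ_closed.isCompact hZ_mul
  dsimp only at hefa hfR heL
  have he : e * e = e := congrArg Prod.fst hidem
  have hf : f.unop * f.unop = f.unop := congrArg (fun p => p.2.unop) hidem
  have hea : e * a = a := by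
    conv_lhs => rw [← hefa]
    rw [← mul_assoc, ← mul_assoc, he, hefa]
  have haf : a * f.unop = a := by
    conv_lhs => rw [← hefa]
    rw [mul_assoc (e * a), hf, hefa]
  rw [haf] at hfR
  rw [hea] at heL
  exact ⟨hfR, heL⟩

theorem leR_of_leJ_self_mul {a b : S} (h : leJ a (a * b)) : leR a (a * b) := by
  rcases h with h | ⟨x, h⟩ | ⟨y, h⟩ | ⟨x, y, h⟩
  · exact Or.inl h
  · exact (leR_and_leL_of_eq_mul_mul (h.trans (mul_assoc x a b).symm)).1
  · exact Or.inr ⟨y, h⟩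
  · have := (leR_and_leL_of_eq_mul_mul (x := x) (c := b * y)
      (h.trans (by simp only [mul_assoc]))).1
    rw [← mul_assoc] at this
    exact this.trans (leR_mul_right _ _)

theorem leL_of_leJ_mul_self {a b : S} (h : leJ a (b * a)) : leL a (b * a) := by
  rcases h with h | ⟨x, h⟩ | ⟨y, h⟩ | ⟨x, y, h⟩
  · exact Or.inl h
  · exact Or.inr ⟨x, h⟩
  · exact (leR_and_leL_of_eq_mul_mul h).2
  · have := (leR_and_leL_of_eq_mul_mul (x := x * b) (c := y)
      (h.trans (by simp only [mul_assoc]))).2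
    rw [mul_assoc] at this
    exact this.trans (leL_mul_left _ _)

theorem eqJ_mul_of_leJ_of_leR {s u u' : S} (h : leJ u (s * u)) (hu' : leR u' u) :
    eqJ (s * u') u' := by
  have hL := leL_of_leJ_mul_self h
  refine ⟨leJ_mul_left _ _, ?_⟩
  rcases hu' with rfl | ⟨c, rfl⟩
  · exact hL.leJ
  · rw [← mul_assoc]
    exact (hL.mul_right c).leJ

theorem eqJ_mul_of_leJ_of_leL {s s' u : S} (h : leJ s (s * u)) (hs' : leL s' s) :
    eqJ (s' * u) s' := by
  have hR := leR_of_leJ_self_mul h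
  refine ⟨leJ_mul_right _ _, ?_⟩
  rcases hs' with rfl | ⟨c, rfl⟩
  · exact hR.leJ
  · rw [mul_assoc]
    exact (hR.mul_left c).leJ

theorem isClosed_hClass (s : S) : IsClosed (hClass s) :=
  ((isClosed_setOf_leR s).inter (isClosed_setOf_leR_swap s)).inter
    ((isClosed_setOf_leL s).inter (isClosed_setOf_leL_swap s))

theorem mul_mem_jClass_of_mem_hClass {t s u s' u' : S} (hs : s ∈ jClass t) (hu : u ∈ jClass t)
    (hsu : s * u ∈ jClass t) (hs' : s' ∈ hClass s) (hu' : u' ∈ hClass u) :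
    s' * u' ∈ jClass t := by
  have hsu' : s * u' ∈ jClass t :=
    (eqJ_mul_of_leJ_of_leR (eqJ.trans hu hsu.symm).1 hu'.1.1).trans (hClass_subset_jClass hu hu')
  exact (eqJ_mul_of_leJ_of_leL (eqJ.trans hs hsu'.symm).1 hs'.2.1).trans
    (hClass_subset_jClass hs hs')

theorem isClosed_jClass {t : S} (hfin : (hClass '' jClass t).Finite) : IsClosed (jClass t) :=
  isClosed_of_saturated hfin (by rintro _ ⟨s, -, rfl⟩; exact isClosed_hClass s)
    fun s hs => ⟨hClass s, mem_image_of_mem _ hs, mem_hClass_self s, hClass_subset_jClass hs⟩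

theorem isClosed_exitPairs {t : S} (hfin : (hClass '' jClass t).Finite) :
    IsClosed (exitPairs t) := by
  refine isClosed_of_saturated (hfin.image2 (· ×ˢ ·) hfin)
    (by rintro _ ⟨_, ⟨s, -, rfl⟩, _, ⟨u, -, rfl⟩, rfl⟩
        exact (isClosed_hClass s).prod (isClosed_hClass u))
    ?_
  rintro ⟨s, u⟩ ⟨hs, hu, hsu⟩
  refine ⟨hClass s ×ˢ hClass u, mem_image2_of_mem (mem_image_of_mem _ hs) (mem_image_of_mem _ hu),
    ⟨mem_hClass_self s, mem_hClass_self u⟩, ?_⟩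
  rintro ⟨s', u'⟩ ⟨hs', hu'⟩
  have hs'J := hClass_subset_jClass hs hs'
  have hu'J := hClass_subset_jClass hu hu'
  exact ⟨hs'J, hu'J, fun h => hsu
    (mul_mem_jClass_of_mem_hClass hs'J hu'J h (mem_hClass_comm.1 hs') (mem_hClass_comm.1 hu'))⟩

theorem isOpen_jClass {t : S} (hJ : IsClosed (jClass t)) (hP : IsClosed (exitPairs t))
    (hgen : closure (Subsemigroup.closure (jClass t) : Set S) = univ) : IsOpen (jClass t) := by
  set W := {a | ∃ b ∈ (fun p : S × S => p.1 * p.2) '' exitPairs t, leJ a b}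
  have hW : IsClosed W := isClosed_setOf_exists_leJ (hP.isCompact.image continuous_mul)
  have hdisj : ∀ a ∈ jClass t, a ∉ W := by
    rintro a ha ⟨_, ⟨⟨s, u⟩, ⟨-, hu, hsu⟩, rfl⟩, hab⟩
    exact hsu ⟨(leJ_mul_left s u).trans hu.1, ha.2.trans hab⟩
  let T : Subsemigroup S :=
    { carrier := jClass t ∪ W
      mul_mem' := by
        rintro a b (ha | ⟨c, hc, hac⟩) (hb | ⟨d, hd, hbd⟩)
        · by_cases hab : a * b ∈ jClass t
          · exact .inl hab
          · exact .inr ⟨a * b, ⟨(a, b), ⟨ha, hb, hab⟩, rfl⟩, leJ_refl _⟩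
        · exact .inr ⟨d, hd, (leJ_mul_left a b).trans hbd⟩
        · exact .inr ⟨c, hc, (leJ_mul_right a b).trans hac⟩
        · exact .inr ⟨c, hc, (leJ_mul_right a b).trans hac⟩ }
  have hcover : univ ⊆ jClass t ∪ W := hgen ▸
    closure_minimal ((Subsemigroup.closure_le (S := T)).2 subset_union_left) (hJ.union hW)
  have : jClass t = Wᶜ :=
    Subset.antisymm hdisj fun a ha => (hcover (mem_univ a)).resolve_right ha
  rw [this]
  exact hW.isOpen_compl

end Compact

theorem stmt_6_general {S : Type*} [Semigroup S] [TopologicalSpace S] [CompactSpace S]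
    [T2Space S] [ContinuousMul S] (t : S) (J : Set S)
    (hJ : J = {x : S | eqJ x t})
    (hfin : {H : Set S | ∃ s ∈ J, H = {x : S | eqR x s ∧ eqL x s}}.Finite)
    (hgen : closure ((Subsemigroup.closure J : Subsemigroup S) : Set S)
      = Set.univ) :
    IsClosed J ∧ IsOpen J := by
  subst hJ
  have hfin' : (hClass '' jClass t).Finite :=
    hfin.subset (by rintro _ ⟨s, hs, rfl⟩; exact ⟨s, hs, rfl⟩)
  have hJ := isClosed_jClass hfin'
  exact ⟨hJ, isOpen_jClass hJ (isClosed_exitPairs hfin') hgen⟩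

/-- Let S be a compact topological semigroup topologically
generated by a regular J-class J having only finitely many H-classes.
Then J is clopen. -/
theorem stmt_6 {S : Type*} [Semigroup S] [TopologicalSpace S] [CompactSpace S]
    [T2Space S] [ContinuousMul S] (t : S) (J : Set S)
    (hJ : J = {x : S | eqJ x t})
    (hreg : ∀ s ∈ J, ∃ x : S, s = s * x * s)
    (hfin : {H : Set S | ∃ s ∈ J, H = {x : S | eqR x s ∧ eqL x s}}.Finite)
    (hgen : closure ((Subsemigroup.closure J : Subsemigroup S) : Set S)
      = Set.univ) :
    IsClosed J ∧ IsOpen J :=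
  stmt_6_general t J hJ hfin hgen
end

section
/- Let S be a finite semigroup all of whose elements lie in a single J-class (S is simple) and which is stable, and suppose that the product of any two idempotents of S is idempotent (S is orthodox). Then every maximal subgroup of S is a homomorphic image of S. -/
section Aux

variable {S : Type*} [Semigroup S]

private def pw (z : S) : ℕ → S
  | 0 => z
  | n+1 => z * pw z n

private lemma pw_zero (z : S) : pw z 0 = z := rfl

private lemma pw_succ (z : S) (n : ℕ) : pw z (n+1) = z * pw z n := rfl

private lemma pw_comm (z : S) (n : ℕ) : z * pw z n = pw z n * z := by
  induction n with
  | zero => rfl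
  | succ n ih =>
    show z * (z * pw z n) = (z * pw z n) * z
    rw [mul_assoc, ih]

private lemma pw_succ' (z : S) (n : ℕ) : pw z (n+1) = pw z n * z := by
  rw [pw_succ, pw_comm]

private lemma pw_add (z : S) (a b : ℕ) : pw z (a + b + 1) = pw z a * pw z b := by
  induction a with
  | zero => rw [Nat.zero_add, pw_succ, pw_zero]
  | succ a ih =>
    rw [show a + 1 + b + 1 = (a + b + 1) + 1 from by omega, pw_succ z (a + b + 1), ih,
      pw_succ z a, ← mul_assoc]

private lemma exists_idem_pw [Fintype S] (z : S) : ∃ n, pw z n * pw z n = pw z n := by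
  have main : ∀ i j : ℕ, i < j → pw z i = pw z j → ∃ n, pw z n * pw z n = pw z n := by
    intro i j hij heq
    have step : ∀ m, i ≤ m → pw z (m + (j - i)) = pw z m := by
      intro m hm
      induction m, hm using Nat.le_induction with
      | base => rw [show i + (j - i) = j from by omega]; exact heq.symm
      | succ m hm ih =>
        rw [show m + 1 + (j - i) = (m + (j - i)) + 1 from by omega, pw_succ, ih, pw_succ]
    have steps : ∀ t m, i ≤ m → pw z (m + t * (j - i)) = pw z m := by
      intro t
      induction t with
      | zero => intro m hm; simp
      | succ t ih =>
        intro m hm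
        rw [show m + (t+1) * (j-i) = (m + (j-i)) + t * (j-i) from by ring,
          ih _ (by omega), step m hm]
    refine ⟨(i+1) * (j-i) - 1, ?_⟩
    have hD : i + 1 ≤ (i+1) * (j-i) := Nat.le_mul_of_pos_right _ (by omega)
    set D := (i+1) * (j-i) with hDdef
    rw [← pw_add, show (D-1) + (D-1) + 1 = (D-1) + D from by omega]
    have h := steps (i+1) (D-1) (by omega)
    rw [← hDdef] at h
    exact h
  obtain ⟨i, j, hne, heq⟩ := Finite.exists_ne_map_eq_of_infinite (pw z)
  rcases Nat.lt_or_ge i j with h | h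
  · exact main i j h heq
  · exact main j i (by omega) heq.symm

private lemma iter {b c d : S} (h : b = c * b * d) : ∀ n, b = pw c n * b * pw d n := by
  intro n
  induction n with
  | zero => simp only [pw_zero]; exact h
  | succ n ih =>
    rw [pw_succ, pw_succ']
    calc b = c * b * d := h
      _ = c * (pw c n * b * pw d n) * d := by rw [← ih]
      _ = c * pw c n * b * (pw d n * d) := by simp only [mul_assoc]

private lemma keyR [Fintype S] {b c d : S} (h : b = c * b * d) : leR b (b * d) := by
  obtain ⟨n, hn⟩ := exists_idem_pw d
  have hb := iter h n
  have h1 : b * pw d n = b := by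
    calc b * pw d n = (pw c n * b * pw d n) * pw d n := by rw [← hb]
      _ = pw c n * b * (pw d n * pw d n) := by simp only [mul_assoc]
      _ = pw c n * b * pw d n := by rw [hn]
      _ = b := hb.symm
  cases n with
  | zero =>
    left
    rw [pw_zero] at h1
    exact h1.symm
  | succ n =>
    right
    refine ⟨pw d n, ?_⟩
    calc b = b * pw d (n+1) := h1.symm
      _ = b * (d * pw d n) := by rw [pw_succ]
      _ = b * d * pw d n := by rw [mul_assoc]

private lemma keyL [Fintype S] {b c d : S} (h : b = c * b * d) : leL b (c * b) := by
  obtain ⟨n, hn⟩ := exists_idem_pw c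
  have hb := iter h n
  have h1 : pw c n * b = b := by
    calc pw c n * b = pw c n * (pw c n * b * pw d n) := by rw [← hb]
      _ = (pw c n * pw c n) * b * pw d n := by simp only [mul_assoc]
      _ = pw c n * b * pw d n := by rw [hn]
      _ = b := hb.symm
  cases n with
  | zero =>
    left
    rw [pw_zero] at h1
    exact h1.symm
  | succ n =>
    right
    refine ⟨pw c n, ?_⟩
    calc b = pw c (n+1) * b := h1.symm
      _ = (pw c n * c) * b := by rw [pw_succ']
      _ = pw c n * (c * b) := by rw [mul_assoc]

private lemma leR_trans {a b c : S} (h1 : leR a b) (h2 : leR b c) : leR a c := by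
  rcases show a = b ∨ ∃ x, a = b * x from h1 with h1 | ⟨u, hu⟩
  · rw [h1]; exact h2
  · rcases show b = c ∨ ∃ x, b = c * x from h2 with h2 | ⟨v, hv⟩
    · right; exact ⟨u, by rw [hu, h2]⟩
    · right; exact ⟨v * u, by rw [hu, hv, mul_assoc]⟩

private lemma leL_trans {a b c : S} (h1 : leL a b) (h2 : leL b c) : leL a c := by
  rcases show a = b ∨ ∃ x, a = x * b from h1 with h1 | ⟨u, hu⟩
  · rw [h1]; exact h2
  · rcases show b = c ∨ ∃ x, b = x * c from h2 with h2 | ⟨v, hv⟩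
    · right; exact ⟨u, by rw [hu, h2]⟩
    · right; exact ⟨u * v, by rw [hu, hv, mul_assoc]⟩

private lemma stabR [Fintype S] {a b : S} (h1 : leR a b) (h2 : leJ b a) : leR b a := by
  rcases show a = b ∨ ∃ x, a = b * x from h1 with h1 | ⟨u, hu⟩
  · exact Or.inl h1.symm
  · rcases show b = a ∨ (∃ x, b = x * a) ∨ (∃ y, b = a * y) ∨ ∃ x y, b = x * a * y from h2
      with h2 | ⟨x, hx⟩ | ⟨y, hy⟩ | ⟨x, y, hxy⟩
    · exact Or.inl h2
    · have hb : b = x * b * u := by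
        calc b = x * a := hx
          _ = x * (b * u) := by rw [hu]
          _ = x * b * u := (mul_assoc _ _ _).symm
      have h3 := keyR hb
      rw [← hu] at h3
      exact h3
    · exact Or.inr ⟨y, hy⟩
    · have hb : b = x * b * (u * y) := by
        calc b = x * a * y := hxy
          _ = x * (b * u) * y := by rw [hu]
          _ = x * b * (u * y) := by simp only [mul_assoc]
      have h3 := keyR hb
      have h4 : b * (u * y) = a * y := by
        rw [hu, mul_assoc]
      rw [h4] at h3
      exact leR_trans h3 (Or.inr ⟨y, rfl⟩)

private lemma stabL [Fintype S] {a b : S} (h1 : leL a b) (h2 : leJ b a) : leL b a := by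
  rcases show a = b ∨ ∃ x, a = x * b from h1 with h1 | ⟨u, hu⟩
  · exact Or.inl h1.symm
  · rcases show b = a ∨ (∃ x, b = x * a) ∨ (∃ y, b = a * y) ∨ ∃ x y, b = x * a * y from h2
      with h2 | ⟨x, hx⟩ | ⟨y, hy⟩ | ⟨x, y, hxy⟩
    · exact Or.inl h2
    · exact Or.inr ⟨x, hx⟩
    · have hb : b = u * b * y := by
        calc b = a * y := hy
          _ = (u * b) * y := by rw [hu]
      have h3 := keyL hb
      rw [← hu] at h3
      exact h3
    · have hb : b = (x * u) * b * y := by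
        calc b = x * a * y := hxy
          _ = x * (u * b) * y := by rw [hu]
          _ = (x * u) * b * y := by simp only [mul_assoc]
      have h3 := keyL hb
      have h4 : (x * u) * b = x * a := by rw [hu, mul_assoc]
      rw [h4] at h3
      exact leL_trans h3 (Or.inr ⟨x, rfl⟩)

end Aux

/-- Let S be a finite simple semigroup (J universal) that is
orthodox (the product of two idempotents is idempotent). Then every maximal
subgroup of S — the H-class of an idempotent e — is a homomorphic image
of S. -/
theorem stmt_19 {S : Type*} [Semigroup S] [Fintype S]
    (hsimple : ∀ x y : S, eqJ x y)
    (horth : ∀ e f : S, e * e = e → f * f = f → (e * f) * (e * f) = e * f)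
    (e : S) (he : e * e = e) :
    ∃ f : S → S, (∀ x y : S, f (x * y) = f x * f y) ∧
      Set.range f = {x : S | eqR x e ∧ eqL x e} := by
  have hJ : ∀ a b : S, leJ a b := fun a b => (hsimple a b).1
  have hR : ∀ p x : S, leR p (p * x) := fun p x => stabR (Or.inr ⟨x, rfl⟩) (hJ p (p * x))
  have hL : ∀ p x : S, leL p (x * p) := fun p x => stabL (Or.inr ⟨x, rfl⟩) (hJ p (x * p))
  -- uniqueness of idempotents within an H-class
  have uniq : ∀ p q : S, p * p = p → q * q = q → eqR q p → eqL q p → q = p := by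
    intro p q hp hq hRq hLq
    have h1 : p * q = q := by
      rcases show q = p ∨ ∃ x, q = p * x from hRq.1 with h | ⟨u, hu⟩
      · rw [h, hp]
      · rw [hu, ← mul_assoc, hp]
    have h2 : p * q = p := by
      rcases show p = q ∨ ∃ x, p = x * q from hLq.2 with h | ⟨w, hw⟩
      · rw [h, hq]
      · rw [hw, mul_assoc, hq]
    rw [← h1, h2]
  -- sandwich lemma: for idempotents f, g we have f e g = f g
  have sand : ∀ f g : S, f * f = f → g * g = g → f * e * g = f * g := by
    intro f g hf hg
    have hfe := horth f e hf he
    have heg := horth e g he hg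
    have h1 : (f * e) * (e * g) = f * e * g := by
      calc (f * e) * (e * g) = f * ((e * e) * g) := by simp only [mul_assoc]
        _ = f * (e * g) := by rw [he]
        _ = f * e * g := by rw [← mul_assoc]
    have hfeg : (f * e * g) * (f * e * g) = f * e * g := by
      rw [← h1]
      exact horth (f * e) (e * g) hfe heg
    have hfg := horth f g hf hg
    have eR : eqR (f * e * g) (f * g) := by
      constructor
      · exact leR_trans (Or.inr ⟨e * g, mul_assoc f e g⟩) (hR f g)
      · refine leR_trans (Or.inr ⟨g, rfl⟩) ?_
        have h := hR f (e * g)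
        rwa [← mul_assoc] at h
    have eL : eqL (f * e * g) (f * g) := by
      constructor
      · exact leL_trans (Or.inr ⟨f * e, rfl⟩) (hL g f)
      · exact leL_trans (Or.inr ⟨f, rfl⟩) (hL g (f * e))
    exact uniq (f * g) (f * e * g) hfg hfeg eR eL
  -- every element has an idempotent right identity and idempotent left identity
  have rid : ∀ a : S, ∃ f : S, f * f = f ∧ a * f = a := by
    intro a
    obtain ⟨n, hn⟩ := exists_idem_pw a
    have hle : leL (pw a n) a := by
      cases n with
      | zero => exact Or.inl (pw_zero a)
      | succ n => exact Or.inr ⟨pw a n, pw_succ' a n⟩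
    generalize hqdef : pw a n = q at hn hle
    refine ⟨q, hn, ?_⟩
    rcases show a = q ∨ ∃ x, a = x * q from stabL hle (hJ a q) with h | ⟨u, hu⟩
    · rw [h, hn]
    · rw [hu, mul_assoc, hn]
  have lid : ∀ a : S, ∃ g : S, g * g = g ∧ g * a = a := by
    intro a
    obtain ⟨n, hn⟩ := exists_idem_pw a
    have hle : leR (pw a n) a := by
      cases n with
      | zero => exact Or.inl (pw_zero a)
      | succ n => exact Or.inr ⟨pw a n, pw_succ a n⟩
    generalize hqdef : pw a n = q at hn hle
    refine ⟨q, hn, ?_⟩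
    rcases show a = q ∨ ∃ x, a = q * x from stabR hle (hJ a q) with h | ⟨u, hu⟩
    · rw [h, hn]
    · rw [hu, ← mul_assoc, hn]
  -- the key absorption: a (e b) = a b for all a b
  have key : ∀ a b : S, a * (e * b) = a * b := by
    intro a b
    obtain ⟨f, hf, haf⟩ := rid a
    obtain ⟨g, hg, hgb⟩ := lid b
    have hs := sand f g hf hg
    calc a * (e * b) = (a * f) * (e * (g * b)) := by rw [haf, hgb]
      _ = a * ((f * e * g) * b) := by simp only [mul_assoc]
      _ = a * ((f * g) * b) := by rw [hs]
      _ = (a * f) * (g * b) := by simp only [mul_assoc]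
      _ = a * b := by rw [haf, hgb]
  refine ⟨fun x => e * x * e, ?_, ?_⟩
  · intro x y
    show e * (x * y) * e = (e * x * e) * (e * y * e)
    calc e * (x * y) * e = (e * x) * (y * e) := by simp only [mul_assoc]
      _ = (e * x) * (e * (y * e)) := (key (e * x) (y * e)).symm
      _ = (e * x) * (e * (e * (y * e))) := (key (e * x) (e * (y * e))).symm
      _ = (e * x * e) * (e * y * e) := by simp only [mul_assoc]
  · ext x
    simp only [Set.mem_range, Set.mem_setOf_eq]
    constructor
    · rintro ⟨y, rfl⟩
      constructor
      · constructor
        · exact Or.inr ⟨y * e, mul_assoc e y e⟩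
        · have h := hR e (y * e)
          rwa [← mul_assoc] at h
      · constructor
        · exact Or.inr ⟨e * y, rfl⟩
        · exact hL e (e * y)
    · rintro ⟨hxR, hxL⟩
      have h1 : e * x = x := by
        rcases show x = e ∨ ∃ u, x = e * u from hxR.1 with h | ⟨u, hu⟩
        · rw [h, he]
        · rw [hu, ← mul_assoc, he]
      have h2 : x * e = x := by
        rcases show x = e ∨ ∃ u, x = u * e from hxL.1 with h | ⟨u, hu⟩
        · rw [h, he]
        · rw [hu, mul_assoc, he]
      exact ⟨x, by rw [h1, h2]⟩
end
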